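/- arXiv:2006.04741 — 5 statements merged into one kernel-verified Lean document; each statement's English description precedes it below -/
import Mathlib

section
/- Let F be a field of characteristic 2 and let q and q' be totally singular quadratic forms over F on finite-dimensional F-vector spaces V and V' with dim V = dim V'. Then q and q' are isometric if and only if they have the same value sets, i.e. {q(x) : x ∈ V} = {q'(y) : y ∈ V'}. -/
/-!
When the polar form vanishes, `q` is additive, so its zero set is a subspace (the radical) and
`q` is injective on any complement `W` of it. Hence `q ≅ 0 ⊥ q|_W`, and `q|_W` has the same
value set as `q`. Two injective additive quadratic maps with the same value set are isometric,
because the bijection matching vectors of equal value is forced to be linear. Since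
`dim V = dim V'`, the radicals then have equal dimension, so the zero forms on them are
isometric as well.
-/

namespace QuadraticMap

section CommRing

variable {R M M' N : Type*} [CommRing R] [AddCommGroup M] [AddCommGroup M'] [AddCommGroup N]
  [Module R M] [Module R M'] [Module R N] {Q : QuadraticMap R M N} {Q' : QuadraticMap R M' N}

theorem map_add_of_polar_eq_zero (hQ : ∀ x y, polar Q x y = 0) (x y : M) :
    Q (x + y) = Q x + Q y := by
  simpa only [polar, sub_sub, sub_eq_zero] using hQ x y

theorem map_sub_of_polar_eq_zero (hQ : ∀ x y, polar Q x y = 0) (x y : M) :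
    Q (x - y) = Q x - Q y :=
  eq_sub_of_add_eq (by rw [← map_add_of_polar_eq_zero hQ, sub_add_cancel])

theorem mem_radical_iff_of_polar_eq_zero (hQ : ∀ x y, polar Q x y = 0) {m : M} :
    m ∈ Q.radical ↔ Q m = 0 := by
  simp [mem_radical_iff', map_add_of_polar_eq_zero hQ]

theorem comp_radical_subtype : Q.comp Q.radical.subtype = 0 :=
  ext fun m => (mem_radical_iff'.mp m.2).1

theorem injective_comp_subtype_of_disjoint_radical (hQ : ∀ x y, polar Q x y = 0)
    {W : Submodule R M} (hW : Disjoint Q.radical W) : Function.Injective (Q.comp W.subtype) := by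
  intro w₁ w₂ h
  have hsub : (w₁ - w₂ : M) ∈ Q.radical := by
    rw [mem_radical_iff_of_polar_eq_zero hQ, map_sub_of_polar_eq_zero hQ]
    exact sub_eq_zero.mpr h
  exact Subtype.ext (sub_eq_zero.mp (hW.le_bot ⟨hsub, W.sub_mem w₁.2 w₂.2⟩))

theorem range_comp_subtype_of_codisjoint_radical (hQ : ∀ x y, polar Q x y = 0)
    {W : Submodule R M} (hW : Codisjoint Q.radical W) :
    Set.range (Q.comp W.subtype) = Set.range Q := by
  refine subset_antisymm (Set.range_subset_iff.mpr fun w => ⟨w, rfl⟩) ?_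
  rintro _ ⟨x, rfl⟩
  obtain ⟨k, w, hk, hw, rfl⟩ := Submodule.codisjoint_iff_exists_add_eq.mp hW x
  exact ⟨⟨w, hw⟩, by simp [map_add_of_polar_eq_zero hQ, (mem_radical_iff'.mp hk).1]⟩

theorem exists_linearMap_apply_eq_of_range_subset (hQ : ∀ x y, polar Q x y = 0)
    (hQ' : ∀ x y, polar Q' x y = 0) (hinj : Function.Injective Q')
    (hrange : Set.range Q ⊆ Set.range Q') : ∃ f : M →ₗ[R] M', ∀ x, Q' (f x) = Q x := by
  choose f hf using fun x => hrange ⟨x, rfl⟩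
  refine ⟨{ toFun := f, map_add' := fun x y => hinj ?_, map_smul' := fun c x => hinj ?_ }, hf⟩
  · simp only [hf, map_add_of_polar_eq_zero hQ, map_add_of_polar_eq_zero hQ']
  · simp only [hf, RingHom.id_apply, QuadraticMap.map_smul]

theorem equivalent_of_injective_of_range_eq (hQ : ∀ x y, polar Q x y = 0)
    (hQ' : ∀ x y, polar Q' x y = 0) (hinj : Function.Injective Q)
    (hinj' : Function.Injective Q') (hrange : Set.range Q = Set.range Q') : Q.Equivalent Q' := by
  obtain ⟨f, hf⟩ := exists_linearMap_apply_eq_of_range_subset hQ hQ' hinj' hrange.le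
  obtain ⟨g, hg⟩ := exists_linearMap_apply_eq_of_range_subset hQ' hQ hinj hrange.ge
  exact ⟨{ toLinearEquiv := LinearEquiv.ofLinearMap f g
              (LinearMap.ext fun y => hinj' (by simp [hf, hg]))
              (LinearMap.ext fun x => hinj (by simp [hf, hg]))
           map_app' := hf }⟩

theorem equivalent_prod_of_isCompl (hQ : ∀ x y, polar Q x y = 0) {p r : Submodule R M}
    (h : IsCompl p r) : ((Q.comp p.subtype).prod (Q.comp r.subtype)).Equivalent Q :=
  ⟨{ toLinearEquiv := Submodule.prodEquivOfIsCompl p r h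
     map_app' := fun x => by simp [map_add_of_polar_eq_zero hQ] }⟩

end CommRing

theorem equivalent_zero_of_finrank_eq {K M M' N : Type*} [Field K] [AddCommGroup M]
    [AddCommGroup M'] [AddCommGroup N] [Module K M] [Module K M'] [Module K N]
    [FiniteDimensional K M] [FiniteDimensional K M']
    (h : Module.finrank K M = Module.finrank K M') :
    (0 : QuadraticMap K M N).Equivalent (0 : QuadraticMap K M' N) :=
  ⟨{ toLinearEquiv := LinearEquiv.ofFinrankEq M M' h, map_app' := fun _ => rfl }⟩

end QuadraticMap

theorem stmt_0_general {F : Type*} [Field F]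
    {V V' : Type*} [AddCommGroup V] [Module F V] [FiniteDimensional F V]
    [AddCommGroup V'] [Module F V'] [FiniteDimensional F V']
    (q : QuadraticForm F V) (q' : QuadraticForm F V')
    (hq : ∀ x y : V, QuadraticMap.polar (⇑q) x y = 0)
    (hq' : ∀ x y : V', QuadraticMap.polar (⇑q') x y = 0)
    (hdim : Module.finrank F V = Module.finrank F V') :
    (∃ e : V ≃ₗ[F] V', ∀ x : V, q' (e x) = q x) ↔ Set.range ⇑q = Set.range ⇑q' := by
  constructor
  · rintro ⟨e, he⟩
    rw [← e.surjective.range_comp]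
    exact congrArg Set.range (funext he).symm
  · intro hrange
    obtain ⟨W, hW⟩ := q.radical.exists_isCompl
    obtain ⟨W', hW'⟩ := q'.radical.exists_isCompl
    obtain ⟨eW⟩ : (q.comp W.subtype).Equivalent (q'.comp W'.subtype) :=
      QuadraticMap.equivalent_of_injective_of_range_eq (fun x y => hq x y) (fun x y => hq' x y)
        (QuadraticMap.injective_comp_subtype_of_disjoint_radical hq hW.disjoint)
        (QuadraticMap.injective_comp_subtype_of_disjoint_radical hq' hW'.disjoint)
        (by rw [QuadraticMap.range_comp_subtype_of_codisjoint_radical hq hW.codisjoint,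
          QuadraticMap.range_comp_subtype_of_codisjoint_radical hq' hW'.codisjoint, hrange])
    have hrad : Module.finrank F q.radical = Module.finrank F q'.radical := by
      have := Submodule.finrank_add_eq_of_isCompl hW
      have := Submodule.finrank_add_eq_of_isCompl hW'
      have := eW.toLinearEquiv.finrank_eq
      omega
    have eK : (q.comp q.radical.subtype).Equivalent (q'.comp q'.radical.subtype) := by
      rw [QuadraticMap.comp_radical_subtype, QuadraticMap.comp_radical_subtype]
      exact QuadraticMap.equivalent_zero_of_finrank_eq hrad
    obtain ⟨e⟩ := (QuadraticMap.equivalent_prod_of_isCompl hq hW).symm.trans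
      ((eK.prod ⟨eW⟩).trans (QuadraticMap.equivalent_prod_of_isCompl hq' hW'))
    exact ⟨e.toLinearEquiv, e.map_app⟩

/-- Over a field of characteristic 2, two totally singular quadratic forms
on spaces of the same finite dimension are isometric iff they have the same value sets. -/
theorem stmt_0 {F : Type*} [Field F] [CharP F 2]
    {V V' : Type*} [AddCommGroup V] [Module F V] [FiniteDimensional F V]
    [AddCommGroup V'] [Module F V'] [FiniteDimensional F V']
    (q : QuadraticForm F V) (q' : QuadraticForm F V')
    (hq : ∀ x y : V, QuadraticMap.polar (⇑q) x y = 0)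
    (hq' : ∀ x y : V', QuadraticMap.polar (⇑q') x y = 0)
    (hdim : Module.finrank F V = Module.finrank F V') :
    (∃ e : V ≃ₗ[F] V', ∀ x : V, q' (e x) = q x) ↔ Set.range ⇑q = Set.range ⇑q' :=
  stmt_0_general q q' hq hq' hdim
end

section
/- Let F be a field of characteristic 2. Let q ≅ q_r ⊥ q_s and q' ≅ q'_r ⊥ q'_s be quadratic forms over F of the same total dimension, where q_r and q'_r are nonsingular quadratic forms and q_s and q'_s are totally singular quadratic forms, and set m = dim q_r. Then q ≅ q' if and only if q_s ≅ q'_s and q'_r ⊥ q_r ⊥ q_s ≅ (m × H) ⊥ q_s, where m × H denotes the orthogonal sum of m copies of the quadratic hyperbolic plane H. -/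
/-!
In characteristic 2 a nonsingular form `q` on `V` satisfies `q ⊥ q ≅ (dim V) × H`: choosing a
bilinear `B` with `B u u = q u`, the map `(x, y) ↦ (polar q x + B (x + y), x + y)` is an isometry
onto the hyperbolic form `(f, u) ↦ f u` on `V^* × V`.

An isometry `q_r ⊥ q_s ≅ q'_r ⊥ q'_s` preserves the radical of the polar form, which is the
totally singular summand, so `q_s ≅ q'_s`; adding `q'_r` to both sides gives the forward
implication. Conversely, adding `q_r` to `q'_r ⊥ q_r ⊥ q_s ≅ m × H ⊥ q_s` gives
`m × H ⊥ q'_r ⊥ q_s ≅ m × H ⊥ q_r ⊥ q_s`, and hyperbolic planes cancel from arbitrary quadratic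
forms because reflections and Eichler transformations act transitively on hyperbolic pairs.
-/

open Module
open LinearMap (BilinForm)

namespace QuadraticMap

section CommRing

variable {R M M₁ M₂ M₃ M₁' M₂' N : Type*} [CommRing R] [AddCommGroup N] [Module R N]
  [AddCommGroup M] [Module R M] [AddCommGroup M₁] [Module R M₁]
  [AddCommGroup M₂] [Module R M₂] [AddCommGroup M₃] [Module R M₃]
  [AddCommGroup M₁'] [Module R M₁'] [AddCommGroup M₂'] [Module R M₂']

theorem equivalent_iff_exists_linearEquiv {Q₁ : QuadraticMap R M₁ N}
    {Q₂ : QuadraticMap R M₂ N} :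
    Q₁.Equivalent Q₂ ↔ ∃ e : M₁ ≃ₗ[R] M₂, ∀ x, Q₂ (e x) = Q₁ x :=
  ⟨fun ⟨f⟩ => ⟨f.toLinearEquiv, f.map_app⟩, fun ⟨e, he⟩ => ⟨⟨e, he⟩⟩⟩

instance : @Trans (QuadraticMap R M₁ N) (QuadraticMap R M₂ N) (QuadraticMap R M₃ N)
    Equivalent Equivalent Equivalent :=
  ⟨Equivalent.trans⟩

theorem polar_self_eq_zero {Q : QuadraticMap R M N} {x : M} (hx : Q x = 0) :
    polar Q x x = 0 := by
  simp [polar_self, hx]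

theorem IsometryEquiv.polar_map_map {Q₁ : QuadraticMap R M₁ N} {Q₂ : QuadraticMap R M₂ N}
    (f : Q₁.IsometryEquiv Q₂) (x y : M₁) : polar Q₂ (f x) (f y) = polar Q₁ x y := by
  simp only [polar, ← map_add, f.map_app]

theorem IsometryEquiv.trans_apply {Q₁ : QuadraticMap R M₁ N} {Q₂ : QuadraticMap R M₂ N}
    {Q₃ : QuadraticMap R M₃ N} (f : Q₁.IsometryEquiv Q₂) (g : Q₂.IsometryEquiv Q₃)
    (x : M₁) :
    f.trans g x = g (f x) :=
  rfl

def IsometryEquiv.prodAssoc (Q₁ : QuadraticMap R M₁ N) (Q₂ : QuadraticMap R M₂ N)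
    (Q₃ : QuadraticMap R M₃ N) :
    ((Q₁.prod Q₂).prod Q₃).IsometryEquiv (Q₁.prod (Q₂.prod Q₃)) where
  toLinearEquiv := LinearEquiv.prodAssoc R M₁ M₂ M₃
  map_app' _ := (add_assoc _ _ _).symm

theorem Equivalent.prod_left_comm (Q₁ : QuadraticMap R M₁ N) (Q₂ : QuadraticMap R M₂ N)
    (Q₃ : QuadraticMap R M₃ N) :
    (Q₁.prod (Q₂.prod Q₃)).Equivalent (Q₂.prod (Q₁.prod Q₃)) :=
  ⟨(IsometryEquiv.prodAssoc Q₁ Q₂ Q₃).symm.trans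
    (((IsometryEquiv.prodComm Q₁ Q₂).prod (IsometryEquiv.refl Q₃)).trans
      (IsometryEquiv.prodAssoc Q₂ Q₁ Q₃))⟩

def IsometryEquiv.uniqueProd [Unique M₁] (Q₁ : QuadraticMap R M₁ N)
    (Q₂ : QuadraticMap R M₂ N) :
    (Q₁.prod Q₂).IsometryEquiv Q₂ where
  toLinearEquiv := LinearEquiv.uniqueProd
  map_app' x := by simp [Subsingleton.elim x.1 0]

def IsometryEquiv.piFinSucc (Q : QuadraticMap R M N) (n : ℕ) :
    (Q.prod (QuadraticMap.pi fun _ : Fin n => Q)).IsometryEquiv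
      (QuadraticMap.pi fun _ : Fin (n + 1) => Q) where
  toLinearEquiv := Fin.consLinearEquiv R fun _ => M
  map_app' x := by simp [pi_apply, Fin.sum_univ_succ]

theorem Equivalent.pi_fin_succ_prod (Q : QuadraticMap R M N) (Q' : QuadraticMap R M₁ N)
    (n : ℕ) :
    ((QuadraticMap.pi fun _ : Fin (n + 1) => Q).prod Q').Equivalent
      (Q.prod ((QuadraticMap.pi fun _ : Fin n => Q).prod Q')) :=
  ⟨((IsometryEquiv.piFinSucc Q n).symm.prod (IsometryEquiv.refl Q')).trans
    (IsometryEquiv.prodAssoc _ _ _)⟩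

theorem IsometryEquiv.equivalent_snd {Q₁ : QuadraticMap R M₁ N} {Q₂ : QuadraticMap R M₂ N}
    {Q₁' : QuadraticMap R M₁' N} {Q₂' : QuadraticMap R M₂' N}
    (e : (Q₁.prod Q₂).IsometryEquiv (Q₁'.prod Q₂'))
    (he : ∀ y, (e (0, y)).1 = 0) (he' : ∀ y, (e.symm (0, y)).1 = 0) :
    Q₂.Equivalent Q₂' := by
  have hinr : ∀ y, e (0, y) = (0, (e (0, y)).2) := fun y => Prod.ext (he y) rfl
  have hinr' : ∀ y, e.symm (0, y) = (0, (e.symm (0, y)).2) := fun y => Prod.ext (he' y) rfl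
  refine ⟨⟨LinearEquiv.ofLinearMap
    (LinearMap.snd R M₁' M₂' ∘ₗ e.toLinearEquiv.toLinearMap ∘ₗ LinearMap.inr R M₁ M₂)
    (LinearMap.snd R M₁ M₂ ∘ₗ e.symm.toLinearEquiv.toLinearMap ∘ₗ
      LinearMap.inr R M₁' M₂')
    (LinearMap.ext fun y => ?_) (LinearMap.ext fun y => ?_), fun y => ?_⟩⟩
  · change (e (0, (e.symm (0, y)).2)).2 = y
    rw [← hinr', e.apply_symm_apply]
  · change (e.symm (0, (e (0, y)).2)).2 = y
    rw [← hinr, e.symm_apply_apply]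
  · change Q₂' (e (0, y)).2 = Q₂ y
    have := e.map_app (0, y)
    rw [hinr y] at this
    simpa using this

variable (R) in
def hyperbolicPlane : QuadraticForm R (R × R) :=
  linMulLin (LinearMap.fst R R R) (LinearMap.snd R R R)

theorem hyperbolicPlane_apply (x : R × R) : hyperbolicPlane R x = x.1 * x.2 :=
  rfl

theorem polar_hyperbolicPlane (x y : R × R) :
    polar (hyperbolicPlane R) x y = x.1 * y.2 + x.2 * y.1 := by
  simp only [polar, hyperbolicPlane_apply, Prod.fst_add, Prod.snd_add]
  ring

theorem Equivalent.dualProd_pi_hyperbolicPlane {ι : Type*} [Fintype ι] [DecidableEq ι]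
    (b : Basis ι R M) :
    (QuadraticForm.dualProd R M).Equivalent
      (QuadraticMap.pi fun _ : ι => hyperbolicPlane R) := by
  refine ⟨⟨b.dualBasis.equivFun.prodCongr b.equivFun ≪≫ₗ
    (Equiv.arrowProdEquivProdArrow ι (fun _ => R) (fun _ => R)).symm.toLinearEquiv
      ⟨fun _ _ => rfl, fun _ _ => rfl⟩, fun p => ?_⟩⟩
  simp only [pi_apply, hyperbolicPlane_apply]
  change ∑ i, b.dualBasis.equivFun p.1 i * b.equivFun p.2 i = p.1 p.2
  conv_rhs => rw [← b.sum_equivFun p.2]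
  simp only [map_sum, map_smul, smul_eq_mul, Basis.dualBasis_equivFun, mul_comm]

end CommRing

section Form

variable {R M M₁ M₂ M₁' M₂' : Type*} [CommRing R] [AddCommGroup M] [Module R M]
  [AddCommGroup M₁] [Module R M₁] [AddCommGroup M₂] [Module R M₂]
  [AddCommGroup M₁'] [Module R M₁'] [AddCommGroup M₂'] [Module R M₂']
  {Q₁ : QuadraticForm R M₁} {Q₂ : QuadraticForm R M₂}
  {Q₁' : QuadraticForm R M₁'} {Q₂' : QuadraticForm R M₂'}

theorem IsometryEquiv.fst_apply_inr_eq_zero (e : (Q₁.prod Q₂).IsometryEquiv (Q₁'.prod Q₂'))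
    (h₁' : BilinForm.Nondegenerate (polarBilin Q₁')) (h₂ : ∀ x y, polar Q₂ x y = 0)
    (y : M₂) :
    (e (0, y)).1 = 0 := by
  refine h₁'.1 _ fun x => ?_
  simpa [h₂] using e.polar_map_map (0, y) (e.symm (x, 0))

theorem Equivalent.snd_of_prod (h : (Q₁.prod Q₂).Equivalent (Q₁'.prod Q₂'))
    (h₁ : BilinForm.Nondegenerate (polarBilin Q₁))
    (h₁' : BilinForm.Nondegenerate (polarBilin Q₁'))
    (h₂ : ∀ x y, polar Q₂ x y = 0) (h₂' : ∀ x y, polar Q₂' x y = 0) :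
    Q₂.Equivalent Q₂' :=
  let ⟨e⟩ := h
  e.equivalent_snd (e.fst_apply_inr_eq_zero h₁' h₂) (e.symm.fst_apply_inr_eq_zero h₁ h₂')

def IsHyperbolicPair (Q : QuadraticForm R M) (u v : M) : Prop :=
  Q u = 0 ∧ Q v = 0 ∧ polar Q u v = 1

theorem IsHyperbolicPair.map {Q : QuadraticForm R M} {u v : M} (h : IsHyperbolicPair Q u v)
    (φ : Q.IsometryEquiv Q₁) : IsHyperbolicPair Q₁ (φ u) (φ v) := by
  simpa [IsHyperbolicPair, φ.polar_map_map] using h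

end Form

section Field

variable {F V W W' : Type*} [Field F] [AddCommGroup V] [Module F V]
  [AddCommGroup W] [Module F W] [AddCommGroup W'] [Module F W'] {Q : QuadraticForm F V}

variable (Q) in
def reflection (w : V) (hw : Q w ≠ 0) : Q.IsometryEquiv Q where
  toLinearEquiv := Module.reflection (x := w) (f := (Q w)⁻¹ • polarBilin Q w) <| by
    simp only [LinearMap.smul_apply, polarBilin_apply_apply, polar_self, smul_eq_mul, two_nsmul]
    field_simp
    ring
  map_app' y := by
    change Q (y - ((Q w)⁻¹ * polar Q w y) • w) = Q y
    rw [sub_eq_add_neg, QuadraticMap.map_add (⇑Q), ← neg_smul, QuadraticMap.map_smul,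
      polar_smul_right, polar_comm, smul_eq_mul]
    linear_combination (polar Q y w ^ 2 * (Q w)⁻¹) * mul_inv_cancel₀ hw

theorem reflection_apply (w : V) (hw : Q w ≠ 0) (y : V) :
    reflection Q w hw y = y - ((Q w)⁻¹ * polar Q w y) • w :=
  rfl

variable (Q) in
def eichlerMap (e w : V) : V →ₗ[F] V where
  toFun y := y + polar Q y e • w - (polar Q y w + Q w * polar Q y e) • e
  map_add' a b := by simp only [polar_add_left]; module
  map_smul' c a := by simp only [polar_smul_left, smul_eq_mul, RingHom.id_apply]; module

theorem eichlerMap_apply (e w y : V) :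
    eichlerMap Q e w y = y + polar Q y e • w - (polar Q y w + Q w * polar Q y e) • e :=
  rfl

theorem eichlerMap_neg_apply_eichlerMap {e w : V} (he : Q e = 0) (hew : polar Q e w = 0)
    (y : V) : eichlerMap Q e (-w) (eichlerMap Q e w y) = y := by
  simp only [eichlerMap_apply, polar_add_left, polar_sub_left, polar_smul_left,
    polar_neg_right, polar_self_eq_zero he, polar_comm Q w e, hew, polar_self,
    QuadraticMap.map_neg, nsmul_eq_mul]
  module

variable (Q) in
def eichler (e w : V) (he : Q e = 0) (hew : polar Q e w = 0) : Q.IsometryEquiv Q where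
  toLinearEquiv := LinearEquiv.ofLinearMap (eichlerMap Q e w) (eichlerMap Q e (-w))
    (LinearMap.ext fun y => by
      simpa using eichlerMap_neg_apply_eichlerMap (w := -w) he (by simpa using hew) y)
    (LinearMap.ext (eichlerMap_neg_apply_eichlerMap he hew))
  map_app' y := by
    change Q (eichlerMap Q e w y) = Q y
    rw [eichlerMap_apply, sub_eq_add_neg, QuadraticMap.map_add (⇑Q), QuadraticMap.map_add (⇑Q),
      ← neg_smul, QuadraticMap.map_smul, QuadraticMap.map_smul, he]
    simp only [polar_add_left, polar_smul_left, polar_smul_right, polar_comm Q w e, hew,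
      smul_eq_mul]
    ring

theorem eichler_apply (e w : V) (he : Q e = 0) (hew : polar Q e w = 0) (y : V) :
    eichler Q e w he hew y = y + polar Q y e • w - (polar Q y w + Q w * polar Q y e) • e :=
  rfl

theorem exists_isometryEquiv_apply_eq_of_polar_ne_zero {u e : V} (hu : Q u = 0) (he : Q e = 0)
    (h : polar Q u e ≠ 0) : ∃ g : Q.IsometryEquiv Q, g u = e := by
  have hw : Q (u - e) = -polar Q u e := by
    rw [sub_eq_add_neg, QuadraticMap.map_add (⇑Q), QuadraticMap.map_neg, polar_neg_right, hu, he]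
    ring
  have h' : -polar Q u e ≠ 0 := neg_ne_zero.mpr h
  refine ⟨reflection Q (u - e) (hw ▸ h'), ?_⟩
  rw [reflection_apply, hw, polar_sub_left, polar_self_eq_zero hu, polar_comm Q e u, zero_sub,
    inv_mul_cancel₀ h', one_smul, sub_sub_cancel]

theorem IsHyperbolicPair.exists_isotropic_polar_ne_zero {u v e f : V}
    (huv : IsHyperbolicPair Q u v) (hef : IsHyperbolicPair Q e f) (hue : polar Q u e = 0) :
    ∃ z, Q z = 0 ∧ polar Q u z ≠ 0 ∧ polar Q z e ≠ 0 := by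
  obtain ⟨hu, hv, huv⟩ := huv
  obtain ⟨he, hf, hef⟩ := hef
  rcases ne_or_eq (polar Q v e) 0 with hve | hve
  · exact ⟨v, hv, by simp [huv], hve⟩
  rcases ne_or_eq (polar Q u f) 0 with huf | huf
  · exact ⟨f, hf, huf, by simp [polar_comm Q f e, hef]⟩
  -- `v + f` is orthogonal to neither `u` nor `e`; the multiple of `u` makes it isotropic
  refine ⟨v + f - polar Q v f • u, ?_, ?_, ?_⟩
  · rw [sub_eq_add_neg, ← neg_smul, QuadraticMap.map_add (⇑Q), QuadraticMap.map_add (⇑Q),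
      QuadraticMap.map_smul, polar_add_left, polar_smul_right, polar_smul_right,
      polar_comm Q v u, polar_comm Q f u, huv, huf, hu, hv, hf]
    simp
  · simp [polar_add_right, polar_sub_right, polar_smul_right, huv, huf, polar_self_eq_zero hu]
  · simp [polar_add_left, polar_sub_left, polar_smul_left, hve, polar_comm Q f e, hef, hue]

theorem IsHyperbolicPair.exists_isometryEquiv_apply_eq {u v e f : V}
    (huv : IsHyperbolicPair Q u v) (hef : IsHyperbolicPair Q e f) :
    ∃ g : Q.IsometryEquiv Q, g u = e := by
  rcases ne_or_eq (polar Q u e) 0 with hue | hue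
  · exact exists_isometryEquiv_apply_eq_of_polar_ne_zero huv.1 hef.1 hue
  obtain ⟨z, hz, huz, hze⟩ := huv.exists_isotropic_polar_ne_zero hef hue
  obtain ⟨g₁, hg₁⟩ := exists_isometryEquiv_apply_eq_of_polar_ne_zero huv.1 hz huz
  obtain ⟨g₂, hg₂⟩ := exists_isometryEquiv_apply_eq_of_polar_ne_zero hz hef.1 hze
  exact ⟨g₁.trans g₂, by rw [IsometryEquiv.trans_apply, hg₁, hg₂]⟩

theorem IsHyperbolicPair.exists_isometryEquiv_fix_apply_eq {e v f : V}
    (hev : IsHyperbolicPair Q e v) (hef : IsHyperbolicPair Q e f) :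
    ∃ g : Q.IsometryEquiv Q, g e = e ∧ g v = f := by
  obtain ⟨he, hv, hev⟩ := hev
  obtain ⟨-, hf, hef⟩ := hef
  have hw : polar Q e (f - v) = 0 := by rw [polar_sub_right, hev, hef, sub_self]
  refine ⟨eichler Q e (f - v) he hw, ?_, ?_⟩
  · rw [eichler_apply, polar_self_eq_zero he, hw]
    simp
  · have hQw : Q (f - v) = -polar Q v f := by
      rw [sub_eq_add_neg, QuadraticMap.map_add (⇑Q), QuadraticMap.map_neg, polar_neg_right, hf,
        hv, polar_comm]
      ring
    rw [eichler_apply, hQw, polar_sub_right, polar_self_eq_zero hv, polar_comm Q v e, hev]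
    simp

theorem IsHyperbolicPair.exists_isometryEquiv {u v e f : V}
    (huv : IsHyperbolicPair Q u v) (hef : IsHyperbolicPair Q e f) :
    ∃ g : Q.IsometryEquiv Q, g u = e ∧ g v = f := by
  obtain ⟨g₁, hg₁⟩ := huv.exists_isometryEquiv_apply_eq hef
  obtain ⟨g₂, hg₂e, hg₂f⟩ :=
    (hg₁ ▸ huv.map g₁).exists_isometryEquiv_fix_apply_eq hef
  exact ⟨g₁.trans g₂, by rw [IsometryEquiv.trans_apply, hg₁, hg₂e], hg₂f⟩

theorem isHyperbolicPair_inl (ψ : QuadraticForm F W) :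
    IsHyperbolicPair ((hyperbolicPlane F).prod ψ) ((1, 0), 0) ((0, 1), 0) := by
  simp [IsHyperbolicPair, hyperbolicPlane_apply, polar]

theorem fst_eq_zero_of_polar_eq_zero {ψ : QuadraticForm F W} {z : (F × F) × W}
    (h₁ : polar ((hyperbolicPlane F).prod ψ) z ((1, 0), 0) = 0)
    (h₂ : polar ((hyperbolicPlane F).prod ψ) z ((0, 1), 0) = 0) : z.1 = 0 := by
  simp [polar_hyperbolicPlane] at h₁ h₂
  exact Prod.ext h₂ h₁

theorem IsometryEquiv.fst_apply_inr_eq_zero_of_apply_eq {ψ : QuadraticForm F W}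
    {ψ' : QuadraticForm F W'}
    (k : ((hyperbolicPlane F).prod ψ).IsometryEquiv ((hyperbolicPlane F).prod ψ'))
    (h₁ : k ((1, 0), 0) = ((1, 0), 0)) (h₂ : k ((0, 1), 0) = ((0, 1), 0)) (w : W) :
    (k (0, w)).1 = 0 :=
  fst_eq_zero_of_polar_eq_zero (by rw [← h₁, k.polar_map_map]; simp)
    (by rw [← h₂, k.polar_map_map]; simp)

theorem Equivalent.of_hyperbolicPlane_prod {ψ : QuadraticForm F W} {ψ' : QuadraticForm F W'}
    (h : ((hyperbolicPlane F).prod ψ).Equivalent ((hyperbolicPlane F).prod ψ')) :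
    ψ.Equivalent ψ' := by
  obtain ⟨φ⟩ := h
  obtain ⟨g, hg₁, hg₂⟩ :=
    ((isHyperbolicPair_inl ψ).map φ).exists_isometryEquiv (isHyperbolicPair_inl ψ')
  let k := φ.trans g
  have h₁ : k ((1, 0), 0) = ((1, 0), 0) := hg₁
  have h₂ : k ((0, 1), 0) = ((0, 1), 0) := hg₂
  exact k.equivalent_snd (k.fst_apply_inr_eq_zero_of_apply_eq h₁ h₂)
    (k.symm.fst_apply_inr_eq_zero_of_apply_eq (k.symm_apply_eq.2 h₁.symm)
      (k.symm_apply_eq.2 h₂.symm))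

theorem Equivalent.of_pi_hyperbolicPlane_prod {m : ℕ} {ψ : QuadraticForm F W}
    {ψ' : QuadraticForm F W'}
    (h : ((QuadraticMap.pi fun _ : Fin m => hyperbolicPlane F).prod ψ).Equivalent
      ((QuadraticMap.pi fun _ : Fin m => hyperbolicPlane F).prod ψ')) :
    ψ.Equivalent ψ' := by
  induction m with
  | zero =>
    obtain ⟨φ⟩ := h
    exact ⟨(IsometryEquiv.uniqueProd _ ψ).symm.trans
      (φ.trans (IsometryEquiv.uniqueProd _ ψ'))⟩
  | succ n ih =>
    exact ih <| Equivalent.of_hyperbolicPlane_prod <|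
      (Equivalent.pi_fin_succ_prod _ ψ n).symm.trans
        (h.trans (Equivalent.pi_fin_succ_prod _ ψ' n))

end Field

section CharTwo

variable {F V : Type*} [Field F] [CharP F 2] [AddCommGroup V] [Module F V]
  [FiniteDimensional F V] {q : QuadraticForm F V}

theorem Equivalent.prod_self_dualProd (hq : BilinForm.Nondegenerate (polarBilin q)) :
    (q.prod q).Equivalent (QuadraticForm.dualProd F V) := by
  obtain ⟨B, hB⟩ := LinearMap.BilinMap.toQuadraticMap_surjective q
  have hBq (u : V) : B u u = q u := DFunLike.congr_fun hB u
  let D := BilinForm.toDual (polarBilin q) hq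
  refine ⟨⟨(LinearEquiv.refl F V).skewProd (LinearEquiv.refl F V) LinearMap.id ≪≫ₗ
    LinearEquiv.prodComm F V V ≪≫ₗ (LinearEquiv.refl F V).skewProd D B ≪≫ₗ
    LinearEquiv.prodComm F V (Dual F V), fun p => ?_⟩⟩
  change D p.1 (p.2 + p.1) + B (p.2 + p.1) (p.2 + p.1) = q p.1 + q p.2
  rw [hBq, BilinForm.toDual_def, polarBilin_apply_apply, polar_add_right, polar_self,
    QuadraticMap.map_add (⇑q), polar_comm q p.2, two_nsmul]
  linear_combination (polar q p.1 p.2 + q p.1) * CharTwo.two_eq_zero (R := F)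

theorem Equivalent.prod_self_pi_hyperbolicPlane (hq : BilinForm.Nondegenerate (polarBilin q)) :
    (q.prod q).Equivalent (QuadraticMap.pi fun _ : Fin (finrank F V) => hyperbolicPlane F) :=
  (prod_self_dualProd hq).trans (dualProd_pi_hyperbolicPlane (finBasis F V))

end CharTwo

end QuadraticMap

open QuadraticMap

/-- characterization of isometry of quadratic forms `q ≅ q_r ⊥ q_s` in
characteristic 2 in terms of the totally singular parts and Witt-type data. -/
theorem stmt_1 {F : Type*} [Field F] [CharP F 2]
    {Vr Vs Vr' Vs' : Type*}
    [AddCommGroup Vr] [Module F Vr] [FiniteDimensional F Vr]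
    [AddCommGroup Vs] [Module F Vs] [FiniteDimensional F Vs]
    [AddCommGroup Vr'] [Module F Vr'] [FiniteDimensional F Vr']
    [AddCommGroup Vs'] [Module F Vs'] [FiniteDimensional F Vs']
    (qr : QuadraticForm F Vr) (qs : QuadraticForm F Vs)
    (qr' : QuadraticForm F Vr') (qs' : QuadraticForm F Vs')
    -- `q_r` and `q'_r` are nonsingular: their polar forms are nondegenerate
    (hqr : LinearMap.BilinForm.Nondegenerate (QuadraticMap.polarBilin qr))
    (hqr' : LinearMap.BilinForm.Nondegenerate (QuadraticMap.polarBilin qr'))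
    -- `q_s` and `q'_s` are totally singular: their polar forms vanish
    (hqs : ∀ x y : Vs, QuadraticMap.polar (⇑qs) x y = 0)
    (hqs' : ∀ x y : Vs', QuadraticMap.polar (⇑qs') x y = 0)
    -- the two forms have the same total dimension
    (hdim : Module.finrank F (Vr × Vs) = Module.finrank F (Vr' × Vs'))
    -- the quadratic hyperbolic plane `H : (x, y) ↦ x * y` on `F²`
    (H : QuadraticForm F (F × F))
    (hH : H = QuadraticMap.linMulLin (LinearMap.fst F F F) (LinearMap.snd F F F)) :
    (∃ e : (Vr × Vs) ≃ₗ[F] (Vr' × Vs'), ∀ x, (qr'.prod qs') (e x) = (qr.prod qs) x) ↔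
      ((∃ e : Vs ≃ₗ[F] Vs', ∀ x, qs' (e x) = qs x) ∧
        (∃ e : (Vr' × Vr × Vs) ≃ₗ[F]
            ((Fin (Module.finrank F Vr) → F × F) × Vs),
          ∀ x, ((QuadraticMap.pi fun _ : Fin (Module.finrank F Vr) => H).prod qs) (e x) =
            (qr'.prod (qr.prod qs)) x)) := by
  subst hH
  simp only [← equivalent_iff_exists_linearEquiv]
  constructor
  · intro h
    have hs : qs.Equivalent qs' := h.snd_of_prod hqr hqr' hqs hqs'
    have hm : finrank F Vr' = finrank F Vr := by
      have := hs.some.toLinearEquiv.finrank_eq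
      rw [finrank_prod, finrank_prod] at hdim
      omega
    refine ⟨hs, ?_⟩
    rw [← hm]
    calc Equivalent (qr'.prod (qr.prod qs)) (qr'.prod (qr'.prod qs')) :=
          (Equivalent.refl qr').prod h
      Equivalent _ ((qr'.prod qr').prod qs') := ⟨(IsometryEquiv.prodAssoc _ _ _).symm⟩
      Equivalent _ _ := (Equivalent.prod_self_pi_hyperbolicPlane hqr').prod hs.symm
  · rintro ⟨hs, h⟩
    set P := QuadraticMap.pi fun _ : Fin (finrank F Vr) => hyperbolicPlane F
    have hP : (P.prod (qr'.prod qs)).Equivalent (P.prod (qr.prod qs)) :=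
      calc Equivalent (P.prod (qr'.prod qs)) ((qr.prod qr).prod (qr'.prod qs)) :=
            (Equivalent.prod_self_pi_hyperbolicPlane hqr).symm.prod (Equivalent.refl _)
        Equivalent _ (qr.prod (qr.prod (qr'.prod qs))) := ⟨IsometryEquiv.prodAssoc _ _ _⟩
        Equivalent _ (qr.prod (qr'.prod (qr.prod qs))) :=
            (Equivalent.refl qr).prod (Equivalent.prod_left_comm _ _ _)
        Equivalent _ (qr.prod (P.prod qs)) := (Equivalent.refl qr).prod h
        Equivalent _ _ := Equivalent.prod_left_comm _ _ _
    exact (Equivalent.of_pi_hyperbolicPlane_prod hP).symm.trans ((Equivalent.refl qr').prod hs)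
end

section
/- Let F be a field of characteristic 2, let q be a totally singular quadratic form over F on a finite-dimensional F-vector space V which is not a zero form (i.e. q(x) ≠ 0 for some x), let L/F be a finite field extension, let λ ∈ L \ F, let K = F(λ) be the intermediate field generated by λ, and let a ∈ F*. If aλ is a value of q_L on some nonzero vector of L ⊗_F V, then K/F is separable or L/K is not separable. -/
/-!
Total singularity passes to `q_L`, so `q_L` is additive and, being `c² q(x)` on pure tensors,
takes all its values in `F(L²)`; hence `λ ∈ F(L²)`. If `L/F(λ)` is separable then
`L = F(λ)(L²) ⊆ F(L²)`. A finite extension with `L = F(L^p)` is separable: iterating gives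
`L = F(L^(p^n))` for all `n`, and for `n` the exponent of `L` over the separable closure of `F`,
`L^(p^n)` lies in that closure.
-/

open scoped TensorProduct

/-- `Q` is the scalar extension of the quadratic form `q` to `L`: it satisfies
`Q (c ⊗ x) = c² ⬝ q x` and its polar form is the base change of the polar form of `q`
(a bilinear form is determined by its values on pure tensors). -/
def IsScalarExt (F : Type*) {L : Type*} [Field F] [Field L] [Algebra F L]
    {V : Type*} [AddCommGroup V] [Module F V]
    (q : QuadraticForm F V) (Q : QuadraticForm L (L ⊗[F] V)) : Prop :=
  (∀ (c : L) (x : V), Q (c ⊗ₜ[F] x) = c ^ 2 * algebraMap F L (q x)) ∧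
  ∀ (c d : L) (x y : V),
    QuadraticMap.polar (⇑Q) (c ⊗ₜ[F] x) (d ⊗ₜ[F] y) =
      c * d * algebraMap F L (QuadraticMap.polar (⇑q) x y)

namespace IntermediateField

variable {F L : Type*} [Field F] [Field L] [Algebra F L] (p : ℕ) [ExpChar F p]

theorem pow_mem_adjoin_image_pow {S : Set L} {x : L} (hx : x ∈ adjoin F S) :
    x ^ p ∈ adjoin F ((· ^ p) '' S) := by
  have := expChar_of_injective_algebraMap (algebraMap F L).injective p
  induction hx using adjoin_induction with
  | mem y hy => exact subset_adjoin F _ ⟨y, hy, rfl⟩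
  | algebraMap r => exact map_pow (algebraMap F L) r p ▸ algebraMap_mem _ _
  | add y z _ _ hy hz => exact (add_pow_expChar y z p).symm ▸ add_mem hy hz
  | inv y _ hy => exact (inv_pow y p).symm ▸ inv_mem hy
  | mul y z _ _ hy hz => exact (mul_pow y z p).symm ▸ mul_mem hy hz

theorem adjoin_range_pow_pow_eq_top (h : adjoin F (Set.range (· ^ p) : Set L) = ⊤) (n : ℕ) :
    adjoin F (Set.range (· ^ p ^ n) : Set L) = ⊤ := by
  induction n with
  | zero => simp
  | succ n ih =>
    rw [eq_top_iff, ← h, adjoin_le_iff]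
    rintro _ ⟨x, rfl⟩
    have hx := pow_mem_adjoin_image_pow p (ih ▸ mem_top : x ∈ adjoin F (Set.range (· ^ p ^ n)))
    simpa only [← Set.range_comp, Function.comp_def, ← pow_mul, ← pow_succ, SetLike.mem_coe]
      using hx

theorem isSeparable_of_adjoin_range_pow_eq_top [FiniteDimensional F L]
    (h : adjoin F (Set.range (· ^ p) : Set L) = ⊤) : Algebra.IsSeparable F L := by
  have : ExpChar (separableClosure F L) p :=
    expChar_of_injective_algebraMap (algebraMap F _).injective p
  rw [← separableClosure.eq_top_iff, eq_top_iff,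
    ← adjoin_range_pow_pow_eq_top p h (IsPurelyInseparable.exponent (separableClosure F L) L),
    adjoin_le_iff]
  rintro _ ⟨x, rfl⟩
  obtain ⟨y, hy⟩ := IsPurelyInseparable.exponent_def' (separableClosure F L) p x
  show x ^ p ^ _ ∈ separableClosure F L
  exact hy ▸ y.2

theorem adjoin_range_pow_eq_top_of_isSeparable_of_le {K : IntermediateField F L}
    [Algebra.IsSeparable K L] (hK : K ≤ adjoin F (Set.range (· ^ p) : Set L)) :
    adjoin F (Set.range (· ^ p) : Set L) = ⊤ := by
  have : ExpChar K p := expChar_of_injective_algebraMap (algebraMap F K).injective p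
  have hsep := adjoin_eq_adjoin_pow_expChar_of_isSeparable' K L Set.univ p
  rw [adjoin_univ, Set.image_univ] at hsep
  rw [eq_top_iff]
  intro x _
  have hx : x ∈ adjoin K (Set.range (· ^ p) : Set L) := hsep ▸ mem_top
  have hle : adjoin K (Set.range (· ^ p) : Set L) ≤ extendScalars hK :=
    adjoin_le_iff.2 (subset_adjoin F _)
  exact hle hx

end IntermediateField

namespace IsScalarExt

variable {F L V : Type*} [Field F] [Field L] [Algebra F L] [AddCommGroup V] [Module F V]
  {q : QuadraticForm F V} {Q : QuadraticForm L (L ⊗[F] V)}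

theorem polar_eq_zero (hQ : IsScalarExt F q Q) (hq : ∀ x y, QuadraticMap.polar q x y = 0)
    (z w : L ⊗[F] V) : QuadraticMap.polar Q z w = 0 := by
  induction z using TensorProduct.induction_on with
  | zero => exact QuadraticMap.polar_zero_left _ _
  | add z₁ z₂ h₁ h₂ => rw [QuadraticMap.polar_add_left, h₁, h₂, add_zero]
  | tmul c x =>
    induction w using TensorProduct.induction_on with
    | zero => exact QuadraticMap.polar_zero_right _ _
    | add w₁ w₂ h₁ h₂ => rw [QuadraticMap.polar_add_right, h₁, h₂, add_zero]
    | tmul d y => rw [hQ.2, hq, map_zero, mul_zero]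

theorem apply_mem_adjoin_range_sq (hQ : IsScalarExt F q Q)
    (hq : ∀ x y, QuadraticMap.polar q x y = 0) (z : L ⊗[F] V) :
    Q z ∈ IntermediateField.adjoin F (Set.range (· ^ 2) : Set L) := by
  induction z using TensorProduct.induction_on with
  | zero => simp
  | tmul c x =>
    rw [hQ.1]
    exact mul_mem (IntermediateField.subset_adjoin F _ ⟨c, rfl⟩)
      (IntermediateField.algebraMap_mem _ _)
  | add z w hz hw =>
    have hadd : Q (z + w) = Q z + Q w := by
      simpa only [QuadraticMap.polar, sub_sub, sub_eq_zero] using hQ.polar_eq_zero hq z w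
    exact hadd ▸ add_mem hz hw

end IsScalarExt

theorem stmt_5_general {F L : Type*} [Field F] [CharP F 2] [Field L] [Algebra F L]
    [FiniteDimensional F L]
    {V : Type*} [AddCommGroup V] [Module F V]
    (q : QuadraticForm F V)
    (hts : ∀ x y : V, QuadraticMap.polar (⇑q) x y = 0)
    (Q : QuadraticForm L (L ⊗[F] V)) (hQ : IsScalarExt F q Q)
    (lam : L)
    (a : F) (ha : a ≠ 0)
    (h : ∃ z : L ⊗[F] V, z ≠ 0 ∧ Q z = algebraMap F L a * lam) :
    Algebra.IsSeparable F (IntermediateField.adjoin F {lam}) ∨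
      ¬ Algebra.IsSeparable (IntermediateField.adjoin F {lam}) L := by
  open IntermediateField in
  refine (em' (Algebra.IsSeparable (adjoin F {lam}) L)).elim Or.inr fun hsep => Or.inl ?_
  obtain ⟨z, -, hz⟩ := h
  have hlam_eq : lam = a⁻¹ • Q z := by
    rw [hz, Algebra.smul_def, ← mul_assoc, ← map_mul, inv_mul_cancel₀ ha, map_one, one_mul]
  have hlam : lam ∈ adjoin F (Set.range (· ^ 2) : Set L) :=
    hlam_eq ▸ smul_mem _ (hQ.apply_mem_adjoin_range_sq hts z)
  have : Algebra.IsSeparable F L := isSeparable_of_adjoin_range_pow_eq_top 2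
    (adjoin_range_pow_eq_top_of_isSeparable_of_le 2 (adjoin_simple_le_iff.2 hlam))
  exact Algebra.isSeparable_tower_bot_of_isSeparable F (adjoin F {lam}) L

/-- if `a·λ` (with `a ∈ F*`, `λ ∈ L \ F`) is a nonzero value of the scalar
extension of a nonzero totally singular quadratic form, then `F(λ)/F` is separable or
`L/F(λ)` is not separable. -/
theorem stmt_5 {F L : Type*} [Field F] [CharP F 2] [Field L] [Algebra F L]
    [FiniteDimensional F L]
    {V : Type*} [AddCommGroup V] [Module F V] [FiniteDimensional F V]
    (q : QuadraticForm F V)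
    (hts : ∀ x y : V, QuadraticMap.polar (⇑q) x y = 0)
    (hnz : ∃ x : V, q x ≠ 0)
    (Q : QuadraticForm L (L ⊗[F] V)) (hQ : IsScalarExt F q Q)
    (lam : L) (hlam : lam ∉ Set.range (algebraMap F L))
    (a : F) (ha : a ≠ 0)
    (h : ∃ z : L ⊗[F] V, z ≠ 0 ∧ Q z = algebraMap F L a * lam) :
    Algebra.IsSeparable F (IntermediateField.adjoin F {lam}) ∨
      ¬ Algebra.IsSeparable (IntermediateField.adjoin F {lam}) L :=
  stmt_5_general q hts Q hQ lam a ha h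
end

section
/- Let F be a field of characteristic 2, let b be an anisotropic symmetric bilinear form on a finite-dimensional F-vector space V (i.e. b(x,x) = 0 implies x = 0), and let L/F be a separable algebraic field extension. Then the base change b_L of b to L ⊗_F V is anisotropic over L. -/
open scoped TensorProduct

/-!
Write `z = ∑ eᵢ ⊗ vᵢ` with `(eᵢ)` an `F`-basis of `L`. In characteristic 2 the cross terms of the
symmetric form cancel in pairs, so `b_L(z, z) = ∑ b(vᵢ, vᵢ) eᵢ²`. Over a separable extension the
squares `eᵢ²` stay `F`-linearly independent, so `b_L(z, z) = 0` forces every `b(vᵢ, vᵢ) = 0`, and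
anisotropy gives `vᵢ = 0`.
-/

namespace LinearMap.BilinForm

open LinearMap (BilinForm)

theorem IsSymm.apply_sum_self_of_charTwo {R M ι : Type*} [CommRing R] [CharP R 2]
    [AddCommGroup M] [Module R M] {B : BilinForm R M} (hB : B.IsSymm) (s : Finset ι)
    (x : ι → M) : B (∑ i ∈ s, x i) (∑ i ∈ s, x i) = ∑ i ∈ s, B (x i) (x i) := by
  classical
  induction s using Finset.induction_on with
  | empty => simp
  | insert a s ha ih =>
    simp only [Finset.sum_insert ha, map_add, LinearMap.add_apply, ih, hB.eq (∑ i ∈ s, x i)]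
    linear_combination B (x a) (∑ i ∈ s, x i) * (CharTwo.two_eq_zero (R := R))

theorem IsSymm.baseChange_apply_sum_tmul_self_of_charTwo {F L V ι : Type*} [CommRing F]
    [CommRing L] [CharP L 2] [Algebra F L] [AddCommGroup V] [Module F V]
    {b : BilinForm F V} (hb : b.IsSymm) (s : Finset ι) (l : ι → L) (v : ι → V) :
    b.baseChange L (∑ i ∈ s, l i ⊗ₜ v i) (∑ i ∈ s, l i ⊗ₜ v i) =
      ∑ i ∈ s, b (v i) (v i) • l i ^ 2 := by
  have hbL : (b.baseChange L).IsSymm :=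
    isSymm_iff.mpr (LinearMap.BilinForm.IsSymm.baseChange L (isSymm_iff.mp hb))
  simp only [hbL.apply_sum_self_of_charTwo, baseChange_tmul, sq]

end LinearMap.BilinForm

theorem stmt_7_general {F L : Type*} [Field F] [CharP F 2] [Field L] [Algebra F L]
    [Algebra.IsSeparable F L]
    {V : Type*} [AddCommGroup V] [Module F V]
    (b : LinearMap.BilinForm F V) (hsymm : b.IsSymm)
    (han : ∀ x : V, b x x = 0 → x = 0) :
    ∀ z : L ⊗[F] V, LinearMap.BilinForm.baseChange L b z z = 0 → z = 0 := by
  have : CharP L 2 := charP_of_injective_algebraMap (algebraMap F L).injective 2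
  intro z hz
  let e := Module.Basis.ofVectorSpace F L
  obtain ⟨c, rfl⟩ := TensorProduct.eq_repr_basis_left e z
  rw [Finsupp.sum, hsymm.baseChange_apply_sum_tmul_self_of_charTwo] at hz
  have hsq : LinearIndependent F fun i ↦ e i ^ 2 ^ 1 :=
    e.linearIndependent.map_pow_expChar_pow_of_isSeparable 2 1
  have hc : ∀ i, c i = 0 := fun i ↦ by
    by_contra hi
    exact hi <| han _ <|
      linearIndependent_iff'.mp hsq _ _ (by simpa using hz) i (Finsupp.mem_support_iff.mpr hi)
  obtain rfl : c = 0 := Finsupp.ext hc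
  simp

/-- an anisotropic symmetric bilinear form over a field of characteristic 2
stays anisotropic under separable algebraic field extensions. -/
theorem stmt_7 {F L : Type*} [Field F] [CharP F 2] [Field L] [Algebra F L]
    [Algebra.IsAlgebraic F L] [Algebra.IsSeparable F L]
    {V : Type*} [AddCommGroup V] [Module F V] [FiniteDimensional F V]
    (b : LinearMap.BilinForm F V) (hsymm : b.IsSymm)
    (han : ∀ x : V, b x x = 0 → x = 0) :
    ∀ z : L ⊗[F] V, LinearMap.BilinForm.baseChange L b z z = 0 → z = 0 :=
  stmt_7_general b hsymm han
end

section
/- Let F be a field of characteristic p > 0 and let a = (a_1,…,a_n) and b = (b_1,…,b_n) be tuples in F^n. For a field extension K/F, consider the diagonal p-forms φ_a(x) = a_1 x_1^p + ⋯ + a_n x_n^p and φ_b(x) = b_1 x_1^p + ⋯ + b_n x_n^p as functions K^n → K; say φ_a and φ_b are similar over K if there exist c ∈ K* and an invertible matrix T ∈ GL_n(K) such that φ_a(Tx) = c·φ_b(x) for all x ∈ K^n. If L/F is a separable algebraic field extension and φ_a and φ_b are similar over L, then φ_a and φ_b are similar over F. -/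
/-- The diagonal `p`-form `x ↦ ∑ aᵢ xᵢᵖ` on `Kⁿ`. -/
def diagPForm {K : Type*} [CommRing K] (p : ℕ) {n : ℕ} (a : Fin n → K) :
    (Fin n → K) → K :=
  fun x => ∑ i, a i * x i ^ p

/-- The diagonal `p`-forms with coefficient tuples `a, b ∈ Fⁿ` are similar over a field
extension `K` of `F`: some invertible linear change of variables takes `φ_a` to `c·φ_b`. -/
def diagPFormSimilar (F : Type*) [Field F] (K : Type*) [Field K] [Algebra F K]
    (p n : ℕ) (a b : Fin n → F) : Prop :=
  ∃ c : K, c ≠ 0 ∧ ∃ T : Matrix (Fin n) (Fin n) K, IsUnit T ∧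
    ∀ x : Fin n → K,
      diagPForm p (fun i => algebraMap F K (a i)) (T.mulVec x) =
        c * diagPForm p (fun i => algebraMap F K (b i)) x

/-! Similarity of `φ_a` and `φ_b` over `K` means `∑ i, a i * T i j ^ p = c * b j` for an
invertible `T` and `c ≠ 0`. Making `K` a `K`-vector space through the Frobenius
(`t • x = t ^ p * x`), this says that `T` carries the tuple `(a i)` to the tuple `(c * b j)`.

Over a separable `L/F` the `p`-th powers of an `F`-basis of `L` are again a basis, so there is an
`F`-linear `Θ : L → F` with `Θ c ≠ 0` sending `p`-th powers to `p`-th powers. Applying `Θ` to the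
relation gives `u * b j ∈ span_{Fᵖ} (a i)` with `u = Θ c ≠ 0`, and symmetrically
`u' * a i ∈ span_{Fᵖ} (b j)`. Multiplication by `u` and `u'` is injective, so on these
finite-dimensional spans the two inclusions force `u • span (b) = span (a)`; finally, two
`n`-tuples spanning the same space differ by an invertible matrix. -/

open Module Submodule Set Matrix

theorem LinearMap.exists_linearEquiv_comp_eq {K V W : Type*} [Field K] [AddCommGroup V]
    [Module K V] [FiniteDimensional K V] [AddCommGroup W] [Module K W] (f g : V →ₗ[K] W)
    (h : range f = range g) : ∃ σ : V ≃ₗ[K] V, f ∘ₗ σ = g := by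
  obtain ⟨s, hs⟩ := f.rangeRestrict.exists_rightInverse_of_surjective f.range_rangeRestrict
  have hg : ∀ x, g x ∈ range f := fun x => h ▸ mem_range_self g x
  obtain ⟨Q, hQ⟩ := (ker g).exists_isCompl
  have hker : finrank K (ker g) = finrank K (ker f) := by
    have := f.finrank_range_add_finrank_ker
    have := g.finrank_range_add_finrank_ker
    rw [h] at *
    omega
  let κ := LinearEquiv.ofFinrankEq _ _ hker
  let σ : V →ₗ[K] V :=
    ofIsCompl hQ ((ker f).subtype ∘ₗ κ.toLinearMap) (s ∘ₗ g.codRestrict _ hg ∘ₗ Q.subtype)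
  have hfσ : f ∘ₗ σ = g := by
    ext x
    obtain ⟨u, v, rfl, -⟩ := existsUnique_add_of_isCompl hQ x
    have hv : f (s (g.codRestrict _ hg v)) = g v := congrArg Subtype.val (LinearMap.congr_fun hs _)
    have hu : f (κ u) = 0 := (κ u).2
    simp only [σ, LinearMap.comp_apply, map_add, ofIsCompl_apply_left, ofIsCompl_apply_right]
    simp [hu, hv]
  have hσ : Function.Injective σ := by
    rw [← LinearMap.ker_eq_bot, eq_bot_iff]
    intro x hx
    have hgx : x ∈ ker g := by simpa [← hfσ] using congrArg f hx
    have hκ : σ (⟨x, hgx⟩ : ker g) = 0 := hx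
    rw [ofIsCompl_apply_left] at hκ
    simpa using hκ
  exact ⟨LinearEquiv.ofInjectiveEndo σ hσ, hfσ⟩

theorem exists_isUnit_matrix_of_span_eq {K V : Type*} [Field K] [AddCommGroup V] [Module K V]
    {n : ℕ} {v w : Fin n → V} (h : span K (range v) = span K (range w)) :
    ∃ T : Matrix (Fin n) (Fin n) K, IsUnit T ∧ ∀ j, ∑ i, T i j • v i = w j := by
  obtain ⟨σ, hσ⟩ := LinearMap.exists_linearEquiv_comp_eq (Fintype.linearCombination K v)
    (Fintype.linearCombination K w) (by simp only [Fintype.range_linearCombination, h])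
  refine ⟨LinearMap.toMatrix' σ.toLinearMap, LinearMap.isUnit_toMatrix'_iff.2 ?_, fun j => ?_⟩
  · exact (Module.End.isUnit_iff _).2 σ.bijective
  · simpa [LinearMap.toMatrix'_apply, Fintype.linearCombination_apply] using
      LinearMap.congr_fun hσ (Pi.single j 1)

theorem Submodule.map_eq_of_map_le_of_map_le {K V W : Type*} [Field K] [AddCommGroup V]
    [Module K V] [AddCommGroup W] [Module K W] {A : Submodule K V} {B : Submodule K W}
    [FiniteDimensional K A] {f : V →ₗ[K] W} {g : W →ₗ[K] V}
    (hf : Function.Injective f) (hg : Function.Injective g)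
    (hAB : A.map f ≤ B) (hBA : B.map g ≤ A) : A.map f = B := by
  have : FiniteDimensional K (B.map g) := finiteDimensional_of_le hBA
  have : FiniteDimensional K B := (equivMapOfInjective g hg B).symm.finiteDimensional
  refine eq_of_le_of_finrank_le hAB ?_
  calc finrank K B = finrank K (B.map g) := (equivMapOfInjective g hg B).finrank_eq
    _ ≤ finrank K A := finrank_mono hBA
    _ = finrank K (A.map f) := (equivMapOfInjective f hf A).finrank_eq

def FrobeniusTwist (K : Type*) (_p : ℕ) : Type _ := K

namespace FrobeniusTwist

variable {K : Type*} [Field K] {p : ℕ}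

instance : AddCommGroup (FrobeniusTwist K p) := inferInstanceAs (AddCommGroup K)

def of : K ≃+ FrobeniusTwist K p := AddEquiv.refl K

variable [ExpChar K p]

noncomputable instance : Module K (FrobeniusTwist K p) := Module.compHom K (frobenius K p)

theorem smul_of (t x : K) : t • (of x : FrobeniusTwist K p) = of (t ^ p * x) := rfl

noncomputable def mulLeft (u : K) : FrobeniusTwist K p →ₗ[K] FrobeniusTwist K p where
  toFun x := of (u * of.symm x)
  map_add' x y := by simp [mul_add]
  map_smul' t x := by
    obtain ⟨x, rfl⟩ := of.surjective x
    simp only [smul_of, AddEquiv.symm_apply_apply, RingHom.id_apply]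
    ring_nf

theorem mulLeft_injective {u : K} (hu : u ≠ 0) :
    Function.Injective (mulLeft u : FrobeniusTwist K p →ₗ[K] FrobeniusTwist K p) := by
  intro x y h
  simpa [mulLeft, hu] using h

theorem sum_smul_of {n : ℕ} (t x : Fin n → K) :
    ∑ i, t i • (of (x i) : FrobeniusTwist K p) = of (∑ i, x i * t i ^ p) := by
  simp only [smul_of, map_sum, mul_comm]

end FrobeniusTwist

section DiagPForm

variable {K : Type*} [Field K] {p n : ℕ}

theorem diagPForm_mulVec [ExpChar K p] (A : Fin n → K) (T : Matrix (Fin n) (Fin n) K)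
    (x : Fin n → K) :
    diagPForm p A (T *ᵥ x) = diagPForm p (fun j => ∑ i, A i * T i j ^ p) x := by
  simp only [diagPForm, Matrix.mulVec, dotProduct, sum_pow_char, mul_pow, Finset.mul_sum,
    Finset.sum_mul]
  rw [Finset.sum_comm]
  simp only [mul_assoc]

theorem mul_diagPForm (c : K) (B x : Fin n → K) :
    c * diagPForm p B x = diagPForm p (c • B) x := by
  simp only [diagPForm, Finset.mul_sum, Pi.smul_apply, smul_eq_mul, mul_assoc]

theorem diagPForm_single (hp : p ≠ 0) (A : Fin n → K) (j : Fin n) :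
    diagPForm p A (Pi.single j 1) = A j := by
  simp [diagPForm, Pi.single_apply, zero_pow hp]

theorem diagPForm_mulVec_eq_mul_iff [ExpChar K p] (A B : Fin n → K) (c : K)
    (T : Matrix (Fin n) (Fin n) K) :
    (∀ x, diagPForm p A (T *ᵥ x) = c * diagPForm p B x) ↔
      ∀ j, ∑ i, A i * T i j ^ p = c * B j := by
  simp only [diagPForm_mulVec, mul_diagPForm]
  refine ⟨fun h j => ?_, fun h x => by simp only [funext h]; rfl⟩
  simpa only [diagPForm_single (expChar_ne_zero K p), Pi.smul_apply, smul_eq_mul] using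
    h (Pi.single j 1)

end DiagPForm

section Similar

variable {F K : Type*} [Field F] [Field K] [Algebra F K] {p n : ℕ} {a b : Fin n → F}

theorem diagPFormSimilar.symm (h : diagPFormSimilar F K p n a b) :
    diagPFormSimilar F K p n b a := by
  obtain ⟨c, hc, T, hT, h⟩ := h
  have hdet : IsUnit T.det := (Matrix.isUnit_iff_isUnit_det T).1 hT
  refine ⟨c⁻¹, inv_ne_zero hc, T⁻¹, (Matrix.isUnit_nonsing_inv_iff).2 hT, fun x => ?_⟩
  rw [eq_inv_mul_iff_mul_eq₀ hc, ← h, Matrix.mulVec_mulVec, Matrix.mul_nonsing_inv T hdet,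
    Matrix.one_mulVec]

theorem diagPFormSimilar_iff [ExpChar K p] :
    diagPFormSimilar F K p n a b ↔ ∃ c : K, c ≠ 0 ∧ ∃ T : Matrix (Fin n) (Fin n) K, IsUnit T ∧
      ∀ j, ∑ i, algebraMap F K (a i) * T i j ^ p = c * algebraMap F K (b j) := by
  simp only [diagPFormSimilar, diagPForm_mulVec_eq_mul_iff]

end Similar

theorem Algebra.IsSeparable.exists_linearMap_ne_zero_map_pow (F : Type*) {L : Type*} [Field F]
    [Field L] [Algebra F L] [Algebra.IsSeparable F L] (p : ℕ) [ExpChar F p] {c : L} (hc : c ≠ 0) :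
    ∃ Θ : L →ₗ[F] F, Θ c ≠ 0 ∧ ∀ l, ∃ t, Θ (l ^ p) = t ^ p := by
  have : ExpChar L p := expChar_of_injective_algebraMap (algebraMap F L).injective p
  let b := Basis.ofVectorSpace F L
  let bp := b.mapPowExpCharPowOfIsSeparable p 1
  have hbp : ∀ i, bp i = b i ^ p := fun i => by simp [bp, Basis.mapPowExpCharPowOfIsSeparable]
  obtain ⟨γ, hγ⟩ := Finsupp.ne_iff.1 ((map_ne_zero_iff _ bp.repr.injective).2 hc)
  refine ⟨bp.coord γ, hγ, fun l => ⟨b.repr l γ, ?_⟩⟩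
  have hp : p ≠ 0 := expChar_ne_zero F p
  have hl :
      l ^ p = Finsupp.linearCombination F bp ((b.repr l).mapRange (· ^ p) (zero_pow hp)) := by
    conv_lhs => rw [← b.linearCombination_repr l]
    rw [Finsupp.linearCombination_apply, Finsupp.linearCombination_apply,
      Finsupp.sum_mapRange_index (fun i => zero_smul F (bp i)), Finsupp.sum, Finsupp.sum,
      sum_pow_char]
    simp only [smul_pow, hbp]
  rw [hl, Basis.coord_apply, Basis.repr_linearCombination, Finsupp.mapRange_apply]

namespace FrobeniusTwist

variable {F : Type*} [Field F] {p n : ℕ} [ExpChar F p] {a b : Fin n → F}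

theorem span_eq_span_mul_of_forall_mem {u u' : F} (hu : u ≠ 0) (hu' : u' ≠ 0)
    (hba : ∀ j, (of (u * b j) : FrobeniusTwist F p) ∈ span F (range fun i => of (a i)))
    (hab : ∀ i, (of (u' * a i) : FrobeniusTwist F p) ∈ span F (range fun j => of (b j))) :
    span F (range fun i => (of (a i) : FrobeniusTwist F p)) =
      span F (range fun j => of (u * b j)) := by
  have hmap : (span F (range fun j => (of (b j) : FrobeniusTwist F p))).map (mulLeft u) =
      span F (range fun j => of (u * b j)) := by
    rw [map_span, ← range_comp]
    rfl
  have := FiniteDimensional.span_of_finite F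
    (finite_range fun j => (of (b j) : FrobeniusTwist F p))
  rw [← hmap]
  refine (map_eq_of_map_le_of_map_le (mulLeft_injective hu) (mulLeft_injective hu') ?_ ?_).symm
  · rw [hmap, span_le]
    rintro _ ⟨j, rfl⟩
    exact hba j
  · rw [map_span, span_le]
    rintro _ ⟨_, ⟨i, rfl⟩, rfl⟩
    exact hab i

theorem diagPFormSimilar_of_span_eq {u : F} (hu : u ≠ 0)
    (h : span F (range fun i => (of (a i) : FrobeniusTwist F p)) =
      span F (range fun j => of (u * b j))) :
    diagPFormSimilar F F p n a b := by
  obtain ⟨S, hS, hSab⟩ := exists_isUnit_matrix_of_span_eq h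
  refine diagPFormSimilar_iff.2 ⟨u, hu, S, hS, fun j => (of (p := p)).injective ?_⟩
  simpa only [sum_smul_of, Algebra.algebraMap_self, RingHom.id_apply] using hSab j

theorem _root_.diagPFormSimilar.exists_mul_mem_span {L : Type*} [Field L] [Algebra F L]
    [Algebra.IsSeparable F L] (h : diagPFormSimilar F L p n a b) :
    ∃ u : F, u ≠ 0 ∧
      ∀ j, (of (u * b j) : FrobeniusTwist F p) ∈ span F (range fun i => of (a i)) := by
  have : ExpChar L p := expChar_of_injective_algebraMap (algebraMap F L).injective p
  obtain ⟨c, hc, T, -, hT⟩ := diagPFormSimilar_iff.1 h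
  obtain ⟨Θ, hΘc, hΘ⟩ := Algebra.IsSeparable.exists_linearMap_ne_zero_map_pow F p hc
  choose t ht using fun i j => hΘ (T i j)
  refine ⟨Θ c, hΘc, fun j => (mem_span_range_iff_exists_fun F).2 ⟨fun i => t i j, ?_⟩⟩
  have hΘT := congrArg Θ (hT j)
  simp only [mul_comm c, ← Algebra.smul_def, map_sum, map_smul, ht, smul_eq_mul] at hΘT
  rw [sum_smul_of, hΘT, mul_comm]

end FrobeniusTwist

theorem stmt_15_general {F : Type*} [Field F] (p : ℕ) [CharP F p] (hp : 0 < p)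
    {L : Type*} [Field L] [Algebra F L]
    [Algebra.IsSeparable F L]
    (n : ℕ) (a b : Fin n → F)
    (hsim : diagPFormSimilar F L p n a b) :
    diagPFormSimilar F F p n a b := by
  have : NeZero p := ⟨hp.ne'⟩
  have : ExpChar F p := ExpChar.prime (CharP.char_is_prime_of_pos F p).out
  obtain ⟨u, hu, hba⟩ := hsim.exists_mul_mem_span
  obtain ⟨u', hu', hab⟩ := hsim.symm.exists_mul_mem_span
  exact FrobeniusTwist.diagPFormSimilar_of_span_eq hu
    (FrobeniusTwist.span_eq_span_mul_of_forall_mem hu hu' hba hab)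

/-- diagonal `p`-forms over a field `F` of characteristic `p > 0` that become
similar over a separable algebraic extension are already similar over `F`. -/
theorem stmt_15 {F : Type*} [Field F] (p : ℕ) [CharP F p] (hp : 0 < p)
    {L : Type*} [Field L] [Algebra F L]
    [Algebra.IsAlgebraic F L] [Algebra.IsSeparable F L]
    (n : ℕ) (a b : Fin n → F)
    (hsim : diagPFormSimilar F L p n a b) :
    diagPFormSimilar F F p n a b :=
  stmt_15_general p hp n a b hsim
end
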